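/- Let T_n ∈ C(E_n) with Δ_b((T_n)) ≠ ∅, let D_n := dom(T_n) with graph norms, and let J_n : D_n → E_n be the embeddings. Then (J_n) is discretely compact if and only if for some (equivalently, every) λ ∈ Δ_b((T_n)) there exists n_0 such that ((T_n − λ)⁻¹)_{n ≥ n_0} is discretely compact. -/
import Mathlib


open Filter Topology

/-- `R` is the resolvent `(T - l)⁻¹` of `T`, i.e. `l ∈ ρ(T)`. -/
def IsResolvent {F : Type*} [NormedAddCommGroup F] [NormedSpace ℂ F]
    (T : F →ₗ.[ℂ] F) (l : ℂ) (R : F →L[ℂ] F) : Prop :=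
  (∀ x : T.domain, R (T x - l • (x : F)) = (x : F)) ∧
  (∀ y : F, ∃ h : R y ∈ T.domain, T ⟨R y, h⟩ - l • R y = y)

/-- Stummel's notion of a **discretely compact sequence** of bounded operators
`A_n ∈ L(D_n, E_n)`, `E, E_n` closed subspaces of `E₀`. -/
def DiscretelyCompact {E₀ : Type*} [NormedAddCommGroup E₀] [NormedSpace ℂ E₀]
    (E : Submodule ℂ E₀) {D : ℕ → Type*} [∀ n, NormedAddCommGroup (D n)]
    [∀ n, NormedSpace ℂ (D n)] (En : ℕ → Submodule ℂ E₀)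
    (A : ∀ n, D n →L[ℂ] En n) : Prop :=
  ∀ φ : ℕ → ℕ, StrictMono φ →
    ∀ x : ∀ k, D (φ k), (∃ M : ℝ, ∀ k, ‖x k‖ ≤ M) →
      ∃ ψ : ℕ → ℕ, StrictMono ψ ∧ ∃ y ∈ E,
        Tendsto (fun k => ((A (φ (ψ k)) (x (ψ k)) : E₀))) atTop (𝓝 y)

section

variable {E₀ : Type*} [NormedAddCommGroup E₀] [NormedSpace ℂ E₀]
  (E : Submodule ℂ E₀) (En : ℕ → Submodule ℂ E₀)
  (Tn : ∀ n, En n →ₗ.[ℂ] En n)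

/-- `l ∈ Δ_b((T_n)_n)`: eventually `l ∈ ρ(T_n)` with uniformly bounded
resolvents. -/
def InRegionOfBoundedness (l : ℂ) : Prop :=
  ∃ n₀ : ℕ, ∃ M : ℝ, ∀ n, n₀ ≤ n → ∃ R : En n →L[ℂ] En n,
    IsResolvent (Tn n) l R ∧ ‖R‖ ≤ M

/-- Discrete compactness of the embeddings
`J_n : (dom T_n, ‖·‖_{T_n}) → E_n ⊆ E₀`: every sequence bounded in the graph
norms has a subsequence converging in `E₀` to a limit in `E`. -/
def EmbeddingsDiscretelyCompact : Prop :=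
  ∀ φ : ℕ → ℕ, StrictMono φ →
    ∀ x : ∀ k, (Tn (φ k)).domain,
      (∃ M : ℝ, ∀ k, ‖((x k : En (φ k)) : E₀)‖ +
        ‖((Tn (φ k) (x k) : En (φ k)) : E₀)‖ ≤ M) →
      ∃ ψ : ℕ → ℕ, StrictMono ψ ∧ ∃ y ∈ E,
        Tendsto (fun k => (((x (ψ k) : En (φ (ψ k))) : E₀))) atTop (𝓝 y)

/-- The tail `((T_n − l)⁻¹)_{n ≥ n₀}` exists and is discretely compact for
some `n₀`. -/
def TailResolventsDiscretelyCompact (l : ℂ) : Prop :=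
  ∃ (n₀ : ℕ) (R : ∀ n, En n →L[ℂ] En n),
    (∀ n, n₀ ≤ n → IsResolvent (Tn n) l (R n)) ∧
    DiscretelyCompact E (fun k => En (k + n₀)) (fun k => R (k + n₀))


/-- Cast an element of `En m` to `En n` along `h : m = n`. -/
def castEn {m n : ℕ} (h : m = n) (z : En m) : En n := ⟨(z : E₀), h ▸ z.2⟩

lemma R_castEn (R : ∀ n, En n →L[ℂ] En n) {m n : ℕ} (h : m = n) (z : En m) :
    ((R n (castEn En h z) : En n) : E₀) = ((R m z : En m) : E₀) := by
  subst h; rfl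

lemma aux_forward (hemb : EmbeddingsDiscretelyCompact E En Tn)
    (l : ℂ) (hl : InRegionOfBoundedness En Tn l) :
    TailResolventsDiscretelyCompact E En Tn l := by
  obtain ⟨n₀, M, hR⟩ := hl
  set R : ∀ n, En n →L[ℂ] En n :=
    fun n => if h : n₀ ≤ n then (hR n h).choose else 0 with hRdef
  have hres : ∀ n, n₀ ≤ n → IsResolvent (Tn n) l (R n) := fun n h => by
    simp only [hRdef, dif_pos h]; exact (hR n h).choose_spec.1
  have hbd : ∀ n, n₀ ≤ n → ‖R n‖ ≤ M := fun n h => by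
    simp only [hRdef, dif_pos h]; exact (hR n h).choose_spec.2
  refine ⟨n₀, R, hres, ?_⟩
  intro φ hφ z hz
  obtain ⟨M', hM'⟩ := hz
  have hM0 : 0 ≤ M := le_trans (norm_nonneg (R n₀)) (hbd n₀ le_rfl)
  set σ : ℕ → ℕ := fun k => φ k + n₀ with hσdef
  have hσ : StrictMono σ := fun a b h => Nat.add_lt_add_right (hφ h) n₀
  have hσn₀ : ∀ k, n₀ ≤ σ k := fun k => Nat.le_add_left n₀ (φ k)
  set x : ∀ k, (Tn (σ k)).domain :=
    fun k => ⟨R (σ k) (z k), ((hres (σ k) (hσn₀ k)).2 (z k)).choose⟩ with hxdef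
  have hTx : ∀ k, Tn (σ k) (x k) = z k + l • (R (σ k) (z k)) := fun k => by
    have h := ((hres (σ k) (hσn₀ k)).2 (z k)).choose_spec
    rw [sub_eq_iff_eq_add] at h
    exact h
  have hRz : ∀ k, ‖R (σ k) (z k)‖ ≤ M * M' := fun k =>
    le_trans ((R (σ k)).le_opNorm (z k))
      (mul_le_mul (hbd _ (hσn₀ k)) (hM' k) (norm_nonneg _) hM0)
  obtain ⟨ψ, hψ, y, hyE, hconv⟩ :=
    hemb σ hσ x ⟨M * M' + (M' + ‖l‖ * (M * M')), fun k => by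
      have h1 : ‖((x k : En (σ k)) : E₀)‖ ≤ M * M' := hRz k
      have h2 : ‖((Tn (σ k) (x k) : En (σ k)) : E₀)‖ ≤ M' + ‖l‖ * (M * M') := by
        show ‖Tn (σ k) (x k)‖ ≤ M' + ‖l‖ * (M * M')
        rw [hTx k]
        calc ‖z k + l • R (σ k) (z k)‖
            ≤ ‖z k‖ + ‖l • R (σ k) (z k)‖ := norm_add_le _ _
          _ = ‖z k‖ + ‖l‖ * ‖R (σ k) (z k)‖ := by rw [norm_smul]
          _ ≤ M' + ‖l‖ * (M * M') :=
              add_le_add (hM' k) (mul_le_mul_of_nonneg_left (hRz k) (norm_nonneg l))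
      linarith⟩
  exact ⟨ψ, hψ, y, hyE, hconv⟩

lemma aux_backward (l : ℂ) (ht : TailResolventsDiscretelyCompact E En Tn l) :
    EmbeddingsDiscretelyCompact E En Tn := by
  obtain ⟨n₀, R, hres, hdc⟩ := ht
  intro φ hφ x hx
  obtain ⟨M, hM⟩ := hx
  have hφle : ∀ j, j ≤ φ j := fun j => hφ.le_apply
  set φ' : ℕ → ℕ := fun k => φ (k + n₀) - n₀ with hφ'def
  have he : ∀ k, φ' k + n₀ = φ (k + n₀) := fun k => by
    have := hφle (k + n₀); simp only [hφ'def]; omega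
  have hφ' : StrictMono φ' := fun a b h => by
    have h1 := hφ (Nat.add_lt_add_right h n₀)
    have h2 := hφle (a + n₀); have h3 := hφle (b + n₀)
    simp only [hφ'def]; omega
  set w : ∀ j, En (φ j) :=
    fun j => Tn (φ j) (x j) - l • ((x j : En (φ j))) with hwdef
  set z : ∀ k, En (φ' k + n₀) :=
    fun k => castEn En (he k).symm (w (k + n₀)) with hzdef
  have hzbd : ∀ k, ‖z k‖ ≤ M + ‖l‖ * M := fun k => by
    have hb := hM (k + n₀)
    have hx0 := norm_nonneg (((x (k + n₀) : En (φ (k + n₀))) : E₀))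
    have hT0 := norm_nonneg (((Tn (φ (k + n₀)) (x (k + n₀)) : En (φ (k + n₀))) : E₀))
    have hxk : ‖((x (k + n₀) : En (φ (k + n₀))) : E₀)‖ ≤ M := by linarith
    have hTk : ‖((Tn (φ (k + n₀)) (x (k + n₀)) : En (φ (k + n₀))) : E₀)‖ ≤ M := by linarith
    show ‖w (k + n₀)‖ ≤ M + ‖l‖ * M
    calc ‖w (k + n₀)‖
        ≤ ‖Tn (φ (k + n₀)) (x (k + n₀))‖ + ‖l • ((x (k + n₀) : En (φ (k + n₀))))‖ :=
          norm_sub_le _ _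
      _ = ‖Tn (φ (k + n₀)) (x (k + n₀))‖ + ‖l‖ * ‖((x (k + n₀) : En (φ (k + n₀))))‖ := by
          rw [norm_smul]
      _ ≤ M + ‖l‖ * M := add_le_add hTk (mul_le_mul_of_nonneg_left hxk (norm_nonneg l))
  obtain ⟨ψ, hψ, y, hyE, hconv⟩ := hdc φ' hφ' z ⟨M + ‖l‖ * M, hzbd⟩
  refine ⟨fun k => ψ k + n₀, fun a b h => Nat.add_lt_add_right (hψ h) n₀, y, hyE, ?_⟩
  refine hconv.congr fun k => ?_
  have hge : n₀ ≤ φ (ψ k + n₀) := le_trans (Nat.le_add_left n₀ (ψ k)) (hφle _)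
  calc ((R (φ' (ψ k) + n₀) (z (ψ k)) : En (φ' (ψ k) + n₀)) : E₀)
      = ((R (φ (ψ k + n₀)) (w (ψ k + n₀)) : En (φ (ψ k + n₀))) : E₀) :=
        R_castEn En R (he (ψ k)).symm (w (ψ k + n₀))
    _ = ((x (ψ k + n₀) : En (φ (ψ k + n₀))) : E₀) :=
        congrArg _ ((hres (φ (ψ k + n₀)) hge).1 (x (ψ k + n₀)))

/-- **Discrete compactness of graph-norm embeddings versus discrete
compactness of resolvents.**  If `Δ_b((T_n)) ≠ ∅`, then the sequence of
embeddings `(J_n)` is discretely compact iff for some (equivalently, every)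
`λ ∈ Δ_b((T_n))` there exists `n₀` such that `((T_n − λ)⁻¹)_{n ≥ n₀}` is
discretely compact. -/
theorem stmt13
    (hE : IsClosed (E : Set E₀)) (hEn : ∀ n, IsClosed ((En n : Set E₀)))
    (hTn : ∀ n, IsClosed ((Tn n).graph : Set (En n × En n)))
    (hΔ : ∃ l : ℂ, InRegionOfBoundedness En Tn l) :
    (EmbeddingsDiscretelyCompact E En Tn ↔
      ∃ l : ℂ, InRegionOfBoundedness En Tn l ∧
        TailResolventsDiscretelyCompact E En Tn l) ∧
    (EmbeddingsDiscretelyCompact E En Tn ↔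
      ∀ l : ℂ, InRegionOfBoundedness En Tn l →
        TailResolventsDiscretelyCompact E En Tn l) := by
  obtain ⟨l₀, hl₀⟩ := hΔ
  constructor
  · constructor
    · intro hemb; exact ⟨l₀, hl₀, aux_forward E En Tn hemb l₀ hl₀⟩
    · rintro ⟨l, hl, ht⟩; exact aux_backward E En Tn l ht
  · constructor
    · intro hemb l hl; exact ⟨(aux_forward E En Tn hemb l hl).choose, (aux_forward E En Tn hemb l hl).choose_spec⟩
    · intro h; exact aux_backward E En Tn l₀ (h l₀ hl₀)

end
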